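/- arXiv:2605.27998 — 3 statements merged into one kernel-verified Lean document; each statement's English description precedes it below -/
import Mathlib

section
/- Let G = (V,E) be a simple graph and let G' be its subdivision graph: vertices V ∪ {v_e : e ∈ E}, with v_{(a,b)} joined to a and to b for every edge (a,b) ∈ E. Regard V as facilities and the subdivision vertices as unit-weight customers. Then for every R ⊆ V, the subdivision vertex v_{(a,b)} is disconnected from all facilities of V \ R in G' with R deleted if and only if both a ∈ R and b ∈ R. Consequently, the number of disconnected customers equals the number of edges of the induced subgraph G[R]. -/
/-- The subdivision graph of G: vertices V ⊕ E(G), with the subdivision vertex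
of an edge joined to its two endpoints. -/
def subdivisionGraph {V : Type*} (G : SimpleGraph V) :
    SimpleGraph (V ⊕ G.edgeSet) :=
  SimpleGraph.fromRel (fun x y => ∃ (a : V) (e : G.edgeSet),
    x = Sum.inl a ∧ y = Sum.inr e ∧ a ∈ (e : Sym2 V))

namespace SimpleGraph

variable {V : Type*} {G : SimpleGraph V}

theorem subdivisionGraph_adj_inr_iff {e : G.edgeSet} {x : V ⊕ G.edgeSet} :
    (subdivisionGraph G).Adj (Sum.inr e) x ↔ ∃ a ∈ (e : Sym2 V), x = Sum.inl a := by
  cases x <;> simp [subdivisionGraph, eq_comm]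

-- The first step of such a walk already lands on an endpoint of `e`.
theorem exists_walk_subdivisionGraph_avoiding_iff (R : Set V) (e : G.edgeSet) :
    (∃ a : V, a ∉ R ∧ ∃ p : (subdivisionGraph G).Walk (Sum.inr e) (Sum.inl a),
        ∀ x ∈ p.support, ∀ b : V, x = Sum.inl b → b ∉ R) ↔
      ∃ a ∈ (e : Sym2 V), a ∉ R := by
  constructor
  · rintro ⟨_, _, p, hp⟩
    cases p with | cons hadj q => ?_
    obtain ⟨a, hae, rfl⟩ := subdivisionGraph_adj_inr_iff.mp hadj
    exact ⟨a, hae, hp _ (by simp) a rfl⟩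
  · rintro ⟨a, hae, haR⟩
    refine ⟨a, haR, (subdivisionGraph_adj_inr_iff.mpr ⟨a, hae, rfl⟩).toWalk, ?_⟩
    simp [haR]

theorem ncard_setOf_edgeSet (G : SimpleGraph V) (P : Sym2 V → Prop) :
    {e : G.edgeSet | P e}.ncard = {e : Sym2 V | e ∈ G.edgeSet ∧ P e}.ncard := by
  rw [← Set.ncard_image_of_injective _ Subtype.val_injective]
  congr 1
  ext e
  simp [and_comm]

end SimpleGraph

theorem stmt7_general {V : Type*} (G : SimpleGraph V) :
    ∀ R : Set V,
      (∀ e : G.edgeSet,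
        ((¬ ∃ a : V, a ∉ R ∧ ∃ p : (subdivisionGraph G).Walk (Sum.inr e) (Sum.inl a),
            ∀ x ∈ p.support, ∀ b : V, x = Sum.inl b → b ∉ R) ↔
          ∀ a ∈ (e : Sym2 V), a ∈ R)) ∧
      ({e : G.edgeSet | ¬ ∃ a : V, a ∉ R ∧
          ∃ p : (subdivisionGraph G).Walk (Sum.inr e) (Sum.inl a),
            ∀ x ∈ p.support, ∀ b : V, x = Sum.inl b → b ∉ R}.ncard =
        {e : Sym2 V | e ∈ G.edgeSet ∧ ∀ a ∈ e, a ∈ R}.ncard) := by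
  intro R
  have disconnected_iff (e : G.edgeSet) :
      (¬ ∃ a : V, a ∉ R ∧ ∃ p : (subdivisionGraph G).Walk (Sum.inr e) (Sum.inl a),
          ∀ x ∈ p.support, ∀ b : V, x = Sum.inl b → b ∉ R) ↔ ∀ a ∈ (e : Sym2 V), a ∈ R := by
    rw [SimpleGraph.exists_walk_subdivisionGraph_avoiding_iff]
    push Not
    rfl
  refine ⟨disconnected_iff, ?_⟩
  simp only [disconnected_iff]
  exact SimpleGraph.ncard_setOf_edgeSet G (fun e => ∀ a ∈ e, a ∈ R)

/-- In the subdivision-graph interdiction instance (facilities V,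
subdivision vertices as unit customers), after deleting R ⊆ V a subdivision
vertex v_e is disconnected from all remaining facilities iff both endpoints of
e lie in R; consequently the number of disconnected customers equals the
number of edges of the induced subgraph G[R]. -/
theorem stmt7 {V : Type*} [Fintype V] (G : SimpleGraph V) :
    ∀ R : Set V,
      (∀ e : G.edgeSet,
        ((¬ ∃ a : V, a ∉ R ∧ ∃ p : (subdivisionGraph G).Walk (Sum.inr e) (Sum.inl a),
            ∀ x ∈ p.support, ∀ b : V, x = Sum.inl b → b ∉ R) ↔
          ∀ a ∈ (e : Sym2 V), a ∈ R)) ∧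
      ({e : G.edgeSet | ¬ ∃ a : V, a ∉ R ∧
          ∃ p : (subdivisionGraph G).Walk (Sum.inr e) (Sum.inl a),
            ∀ x ∈ p.support, ∀ b : V, x = Sum.inl b → b ∉ R}.ncard =
        {e : Sym2 V | e ∈ G.edgeSet ∧ ∀ a ∈ e, a ∈ R}.ncard) :=
  stmt7_general G
end

section
/- Let G = (V,E) be a simple graph and k a positive integer. Then G contains a clique on k vertices if and only if, in the subdivision-graph facility-interdiction instance (facilities V, unit-weight subdivision customers), there exists a set R ⊆ V with |R| = k whose deletion disconnects exactly k(k−1)/2 customers from all remaining facilities. -/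
/-! A customer `v_e` reaches a surviving facility exactly when some endpoint of `e` survives,
so deleting `R` disconnects precisely the edges of `G` inside `R`. A set of `k` vertices
spans at most `k.choose 2 = k(k-1)/2` pairs, and spans that many edges iff it is a clique. -/

open SimpleGraph Finset

theorem Finset.card_filter_sym2_not_isDiag {α : Type*} [DecidableEq α] (s : Finset α) :
    #{z ∈ s.sym2 | ¬ z.IsDiag} = (#s).choose 2 := by
  rw [sym2_eq_image, Sym2.filter_image_mk_not_isDiag, Sym2.card_image_offDiag]

theorem Finset.coe_filter_sym2_not_isDiag {α : Type*} [DecidableEq α] (s : Finset α) :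
    (({z ∈ s.sym2 | ¬ z.IsDiag} : Finset (Sym2 α)) : Set (Sym2 α)) =
      (s : Set α).sym2 \ Sym2.diagSet := by
  ext z
  induction z using Sym2.ind
  simp

section

variable {V : Type*} (G : SimpleGraph V)

theorem SimpleGraph.isClique_iff_sym2_diff_diagSet_subset {s : Set V} :
    G.IsClique s ↔ s.sym2 \ Sym2.diagSet ⊆ G.edgeSet := by
  constructor
  · rintro h z ⟨hz, hdiag⟩
    induction z using Sym2.ind
    simp only [Set.mk_mem_sym2_iff, Sym2.mem_diagSet, Sym2.mk_isDiag_iff] at hz hdiag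
    exact h hz.1 hz.2 hdiag
  · intro h a ha b hb hab
    exact h ⟨Set.mk_mem_sym2_iff.2 ⟨ha, hb⟩, hab⟩

theorem SimpleGraph.ncard_edgeSet_inter_sym2_eq_choose_two_iff (t : Finset V) :
    (G.edgeSet ∩ (t : Set V).sym2).ncard = (#t).choose 2 ↔ G.IsClique (t : Set V) := by
  classical
  set D : Finset (Sym2 V) := {z ∈ t.sym2 | ¬ z.IsDiag}
  have hsub : G.edgeSet ∩ (t : Set V).sym2 ⊆ D := by
    rw [coe_filter_sym2_not_isDiag]
    exact fun z ⟨hz, hzt⟩ => ⟨hzt, G.not_isDiag_of_mem_edgeSet hz⟩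
  rw [isClique_iff_sym2_diff_diagSet_subset, ← coe_filter_sym2_not_isDiag,
    ← card_filter_sym2_not_isDiag, ← Set.ncard_coe_finset]
  refine ⟨fun h => ?_, fun h => congrArg Set.ncard (hsub.antisymm fun z hz => ⟨h hz, ?_⟩)⟩
  · rw [← Set.eq_of_subset_of_ncard_le hsub h.ge D.finite_toSet]
    exact Set.inter_subset_left
  · rw [coe_filter_sym2_not_isDiag] at hz
    exact hz.1

theorem subdivisionGraph_adj_inr_iff {e : G.edgeSet} {y : V ⊕ G.edgeSet} :
    (subdivisionGraph G).Adj (Sum.inr e) y ↔ ∃ b ∈ (e : Sym2 V), y = Sum.inl b := by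
  rcases y with b | f <;> simp [subdivisionGraph]

theorem subdivisionGraph_exists_walk_avoiding_iff (R : Set V) (e : G.edgeSet) :
    (∃ a : V, a ∉ R ∧ ∃ p : (subdivisionGraph G).Walk (Sum.inr e) (Sum.inl a),
        ∀ x ∈ p.support, ∀ b : V, x = Sum.inl b → b ∉ R) ↔
      ∃ a ∈ (e : Sym2 V), a ∉ R := by
  constructor
  · rintro ⟨a, -, _ | ⟨hadj, p⟩, hp⟩
    obtain ⟨b, hb, rfl⟩ := (subdivisionGraph_adj_inr_iff G).1 hadj
    exact ⟨b, hb, hp _ (by simp [p.start_mem_support]) b rfl⟩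
  · rintro ⟨a, hae, haR⟩
    refine ⟨a, haR, .cons ((subdivisionGraph_adj_inr_iff G).2 ⟨a, hae, rfl⟩) .nil, ?_⟩
    simp [haR]

theorem subdivisionGraph_ncard_disconnected (R : Set V) :
    {e : G.edgeSet | ¬ ∃ a : V, a ∉ R ∧
        ∃ p : (subdivisionGraph G).Walk (Sum.inr e) (Sum.inl a),
          ∀ x ∈ p.support, ∀ b : V, x = Sum.inl b → b ∉ R}.ncard =
      (G.edgeSet ∩ R.sym2).ncard := by
  have hdisc : {e : G.edgeSet | ¬ ∃ a : V, a ∉ R ∧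
      ∃ p : (subdivisionGraph G).Walk (Sum.inr e) (Sum.inl a),
        ∀ x ∈ p.support, ∀ b : V, x = Sum.inl b → b ∉ R} = Subtype.val ⁻¹' R.sym2 := by
    ext e
    rw [Set.mem_ofPred_eq, subdivisionGraph_exists_walk_avoiding_iff, Set.mem_preimage,
      Set.mem_sym2_iff_subset]
    push Not
    rfl
  rw [hdisc, ← Set.ncard_image_of_injective _ Subtype.val_injective, Subtype.image_preimage_coe]

end

theorem stmt8_general {V : Type*} (G : SimpleGraph V)
    (k : ℕ) :
    (∃ t : Finset V, G.IsNClique k t) ↔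
      ∃ R : Set V, R.ncard = k ∧
        {e : G.edgeSet | ¬ ∃ a : V, a ∉ R ∧
            ∃ p : (subdivisionGraph G).Walk (Sum.inr e) (Sum.inl a),
              ∀ x ∈ p.support, ∀ b : V, x = Sum.inl b → b ∉ R}.ncard =
          k * (k - 1) / 2 := by
  simp only [subdivisionGraph_ncard_disconnected, ← Nat.choose_two_right]
  constructor
  · rintro ⟨t, ht, rfl⟩
    exact ⟨t, Set.ncard_coe_finset t, (G.ncard_edgeSet_inter_sym2_eq_choose_two_iff t).2 ht⟩
  · rintro ⟨R, rfl, hR⟩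
    rcases R.finite_or_infinite with hfin | hinf
    · obtain ⟨t, rfl⟩ := hfin.exists_finset_coe
      rw [Set.ncard_coe_finset] at hR ⊢
      exact ⟨t, (G.ncard_edgeSet_inter_sym2_eq_choose_two_iff t).1 hR, rfl⟩
    · exact ⟨∅, by simp [hinf.ncard]⟩

/-- G has a clique on k vertices iff in the subdivision-graph
facility-interdiction instance there is a set R of k facilities whose deletion
disconnects exactly k(k−1)/2 of the unit-weight subdivision customers. -/
theorem stmt8 {V : Type*} [Fintype V] [DecidableEq V] (G : SimpleGraph V)
    (k : ℕ) (hk : 0 < k) :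
    (∃ t : Finset V, G.IsNClique k t) ↔
      ∃ R : Set V, R.ncard = k ∧
        {e : G.edgeSet | ¬ ∃ a : V, a ∉ R ∧
            ∃ p : (subdivisionGraph G).Walk (Sum.inr e) (Sum.inl a),
              ∀ x ∈ p.support, ∀ b : V, x = Sum.inl b → b ∉ R}.ncard =
          k * (k - 1) / 2 :=
  stmt8_general G k
end

section
/- Let T be a tree rooted at some vertex, v an internal vertex with parent p, and R a set of edges of T. If, after removing R from T, the vertex v lies in the same component as some facility located in the subtree rooted at v, then for every vertex u in the subtree of v, whether u can reach a facility in T \ R is unchanged if the edge (p, v) is additionally removed (respectively, restored). -/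
open SimpleGraph Walk

/-- From reachability in `G.deleteEdges R` we get a path in `G` avoiding `R`. -/
private lemma reach_to_path {V : Type*} [DecidableEq V] {G : SimpleGraph V} {R : Set (Sym2 V)} {x y : V}
    (h : (G.deleteEdges R).Reachable x y) :
    ∃ w : G.Walk x y, w.IsPath ∧ ∀ e ∈ w.edges, e ∉ R := by
  obtain ⟨w⟩ := h
  refine ⟨(w.mapLe (G.deleteEdges_le R)).bypass, Walk.bypass_isPath _, fun e he => ?_⟩
  have he' : e ∈ (w.mapLe (G.deleteEdges_le R)).edges := Walk.edges_bypass_subset _ he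
  have : e ∈ w.edges := by
    simpa using he'
  have := Walk.edges_subset_edgeSet w this
  rw [SimpleGraph.edgeSet_deleteEdges] at this
  exact this.2

/-- A path in `G` avoiding `R` gives reachability in `G.deleteEdges R`. -/
private lemma path_to_reach {V : Type*} {G : SimpleGraph V} {R : Set (Sym2 V)} {x y : V}
    (w : G.Walk x y) (h : ∀ e ∈ w.edges, e ∉ R) :
    (G.deleteEdges R).Reachable x y :=
  ⟨w.toDeleteEdges R h⟩

/-- Key structural lemma: if `x` is in the subtree of `v` (i.e. `v` lies on every
root-to-`x` path) then any path from `v` to `x` avoids the parent edge `s(p,v)`. -/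
private lemma subtree_path_avoids {V : Type*} [DecidableEq V] {G : SimpleGraph V} (hT : G.IsTree)
    {root v p : V} (hadj : G.Adj p v)
    (hparent : ∀ q : G.Path root v, p ∈ q.1.support)
    {x : V} (hx : ∀ q : G.Path root x, v ∈ q.1.support)
    (w : G.Walk v x) (hw : w.IsPath) : s(p, v) ∉ w.edges := by
  intro hmem
  -- the (unique) path from root to x
  obtain ⟨r, hr, hru⟩ := hT.existsUnique_path root x
  have hv : v ∈ r.support := hx ⟨r, hr⟩
  set t := r.takeUntil v hv with ht
  set d := r.dropUntil v hv with hd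
  have htp : t.IsPath := hr.takeUntil hv
  have hdp : d.IsPath := hr.dropUntil hv
  -- uniqueness: w = d
  obtain ⟨r', hr', hru'⟩ := hT.existsUnique_path v x
  have hwd : w = d := (hru' w hw).trans (hru' d hdp).symm
  have hpd : p ∈ d.support := by
    rw [← hwd]; exact Walk.fst_mem_support_of_mem_edges w hmem
  have hpt : p ∈ t.support := hparent ⟨t, htp⟩
  have hpv : p ≠ v := G.ne_of_adj hadj
  have hpd' : p ∈ d.support.tail := by
    have := (Walk.mem_support_iff d).mp hpd
    rcases this with h | h
    · exact absurd h hpv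
    · exact h
  -- contradiction with nodup of r.support
  have hnodup : r.support.Nodup := hr.support_nodup
  have hspec : t.append d = r := r.take_spec hv
  rw [← hspec, Walk.support_append] at hnodup
  exact (List.disjoint_of_nodup_append hnodup) hpt hpd'

/-- In a rooted tree, if after removing R the vertex v reaches a
facility located in its own subtree, then for every u in the subtree of v,
whether u reaches a facility is unchanged by additionally removing the parent
edge (p,v).  (Here "u is in the subtree of v" is expressed as: v lies on every
path from the root to u.) -/
theorem stmt12 {V : Type*} [Fintype V] (G : SimpleGraph V) (hT : G.IsTree)
    (root : V) (S : Set V) (v p : V) (hadj : G.Adj p v)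
    (hparent : ∀ q : G.Path root v, p ∈ q.1.support)
    (R : Set (Sym2 V)) (hR : R ⊆ G.edgeSet)
    (hfac : ∃ s ∈ S, (∀ q : G.Path root s, v ∈ q.1.support) ∧
      (G.deleteEdges R).Reachable v s) :
    ∀ u : V, (∀ q : G.Path root u, v ∈ q.1.support) →
      ((∃ s ∈ S, (G.deleteEdges R).Reachable u s) ↔
        (∃ s ∈ S, (G.deleteEdges (R ∪ {s(p, v)})).Reachable u s)) := by
  classical
  intro u hu
  constructor
  · rintro ⟨s, hs, hreach⟩
    obtain ⟨w, hw, hwR⟩ := reach_to_path hreach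
    by_cases hpvw : s(p, v) ∈ w.edges
    · -- reroute through v to the facility s₀ in the subtree
      obtain ⟨s₀, hs₀, hs₀sub, hreach₀⟩ := hfac
      obtain ⟨w₀, hw₀, hw₀R⟩ := reach_to_path hreach₀
      have hw₀pv : s(p, v) ∉ w₀.edges :=
        subtree_path_avoids hT hadj hparent hs₀sub w₀ hw₀
      -- v is on w, take the prefix u → v
      have hvw : v ∈ w.support := Walk.snd_mem_support_of_mem_edges w hpvw
      set t := w.takeUntil v hvw with ht
      have htp : t.IsPath := hw.takeUntil hvw
      have htR : ∀ e ∈ t.edges, e ∉ R := fun e he =>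
        hwR e (Walk.edges_takeUntil_subset w hvw he)
      have htpv : s(p, v) ∉ t.edges := by
        intro hc
        have : s(p, v) ∈ t.reverse.edges := by simpa using hc
        exact subtree_path_avoids hT hadj hparent hu t.reverse htp.reverse this
      refine ⟨s₀, hs₀, path_to_reach (t.append w₀) ?_⟩
      intro e he
      rw [Walk.edges_append, List.mem_append] at he
      rintro hc
      rcases hc with hc | hc
      · rcases he with he | he
        · exact htR e he hc
        · exact hw₀R e he hc
      · rw [Set.mem_singleton_iff] at hc
        subst hc
        rcases he with he | he
        · exact htpv he
        · exact hw₀pv he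
    · refine ⟨s, hs, path_to_reach w ?_⟩
      intro e he hc
      rcases hc with hc | hc
      · exact hwR e he hc
      · rw [Set.mem_singleton_iff] at hc; subst hc; exact hpvw he
  · rintro ⟨s, hs, hreach⟩
    exact ⟨s, hs, hreach.mono (G.deleteEdges_anti Set.subset_union_left)⟩
end
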